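/- arXiv:1602.08134 — 2 statements merged into one kernel-verified Lean document; each statement's English description precedes it below -/
import Mathlib

section
/- For all integers b > a > 1, the difference (ab)!·(1/(b!·(a!)^b) − 1/(a!·(b!)^a)) is a nonnegative integer; equivalently, the number of partitions of an (ab)-set into b blocks of size a is at least the number of partitions into a blocks of size b. -/
/-!
Both numbers are uniform Bell numbers: `(ab)! = U(b, a) · a!^b · b! = U(a, b) · b!^a · a!`, where
`U(m, n)` counts partitions into `m` blocks of size `n`. So `U(a, b) ≤ U(b, a)` amounts to
`a!^b · b! ≤ b!^a · a!`, which is an equality for `b = a`; passing from `b` to `b + 1` multiplies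
the left side by `a! · (b + 1)` and the right side by `(b + 1)^a`, and
`a! ≤ a^(a-1) ≤ (b + 1)^(a-1)`.
-/

open scoped Nat

lemma Nat.succ_factorial_le_pow : ∀ n : ℕ, (n + 1)! ≤ (n + 1) ^ n
  | 0 => le_rfl
  | n + 1 =>
    calc (n + 2)! = (n + 2) * (n + 1)! := factorial_succ _
      _ ≤ (n + 2) * (n + 2) ^ n :=
        Nat.mul_le_mul_left _ ((succ_factorial_le_pow n).trans (Nat.pow_le_pow_left (by omega) n))
      _ = (n + 2) ^ (n + 1) := Nat.pow_succ'.symm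

lemma Nat.factorial_pow_mul_factorial_le {a b : ℕ} (ha : 1 ≤ a) (hab : a ≤ b) :
    a ! ^ b * b ! ≤ b ! ^ a * a ! := by
  induction b, hab using Nat.le_induction with
  | base => rw [mul_comm]
  | succ b hab ih =>
    have hstep : a ! * (b + 1) ≤ (b + 1) ^ a := by
      obtain ⟨c, rfl⟩ : ∃ c, a = c + 1 := ⟨a - 1, by omega⟩
      calc (c + 1)! * (b + 1) ≤ (b + 1) ^ c * (b + 1) :=
            Nat.mul_le_mul_right _
              (c.succ_factorial_le_pow.trans (Nat.pow_le_pow_left (by omega) _))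
        _ = (b + 1) ^ (c + 1) := (pow_succ _ _).symm
    calc a ! ^ (b + 1) * (b + 1)! = (a ! * (b + 1)) * (a ! ^ b * b !) := by
          rw [factorial_succ, pow_succ]; ring
      _ ≤ (b + 1) ^ a * (b ! ^ a * a !) := Nat.mul_le_mul hstep ih
      _ = (b + 1)! ^ a * a ! := by rw [factorial_succ, mul_pow]; ring

lemma Nat.uniformBell_le_uniformBell_swap {a b : ℕ} (ha : 1 ≤ a) (hab : a ≤ b) :
    uniformBell a b ≤ uniformBell b a := by
  refine Nat.le_of_mul_le_mul_right ?_ (by positivity : 0 < b ! ^ a * a !)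
  calc uniformBell a b * (b ! ^ a * a !) = (a * b)! := by
        rw [← mul_assoc, uniformBell_mul_eq a (by omega)]
    _ = uniformBell b a * (a ! ^ b * b !) := by
        rw [← mul_assoc, uniformBell_mul_eq b (by omega), mul_comm]
    _ ≤ uniformBell b a * (b ! ^ a * a !) :=
        Nat.mul_le_mul_left _ (factorial_pow_mul_factorial_le ha hab)

lemma Nat.cast_uniformBell {K : Type*} [Field K] [CharZero K] (m : ℕ) {n : ℕ}
    (hn : n ≠ 0) : (uniformBell m n : K) = (m * n)! / (m ! * n ! ^ m) := by
  have hden : (m ! * n ! ^ m : K) ≠ 0 := by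
    exact_mod_cast (Nat.mul_pos m.factorial_pos (Nat.pow_pos n.factorial_pos)).ne'
  rw [eq_div_iff hden, ← uniformBell_mul_eq m hn]
  push_cast
  ring

/-- For integers `b > a > 1`, the difference
`(ab)!·(1/(b!·(a!)^b) − 1/(a!·(b!)^a))` is a nonnegative integer; equivalently, the
number of partitions of an `(ab)`-set into `b` blocks of size `a`, namely
`(ab)!/(b!·(a!)^b)`, is at least the number `(ab)!/(a!·(b!)^a)` of partitions into
`a` blocks of size `b`. -/
theorem dim_difference_nonneg_integer (a b : ℕ) (ha : 1 < a) (hab : a < b) :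
    (∃ k : ℕ,
      ((a * b).factorial : ℚ) *
          (1 / ((b.factorial : ℚ) * (a.factorial : ℚ) ^ b) -
            1 / ((a.factorial : ℚ) * (b.factorial : ℚ) ^ a)) = (k : ℚ)) ∧
    ((a * b).factorial : ℚ) / ((a.factorial : ℚ) * (b.factorial : ℚ) ^ a) ≤
      ((a * b).factorial : ℚ) / ((b.factorial : ℚ) * (a.factorial : ℚ) ^ b) := by
  have hA : ((a * b)! : ℚ) / (b ! * a ! ^ b) = Nat.uniformBell b a := by
    rw [mul_comm a b, Nat.cast_uniformBell b (by omega)]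
  have hB : ((a * b)! : ℚ) / (a ! * b ! ^ a) = Nat.uniformBell a b :=
    (Nat.cast_uniformBell a (by omega)).symm
  have hle := Nat.uniformBell_le_uniformBell_swap ha.le hab.le
  refine ⟨⟨Nat.uniformBell b a - Nat.uniformBell a b, ?_⟩, ?_⟩
  · rw [mul_sub, mul_one_div, mul_one_div, hA, hB, Nat.cast_sub hle]
  · rw [hA, hB]
    exact_mod_cast hle
end

section
/- For all integers 0 < a ≤ b, the limit as q → 1 of (ab)!/(1−q) · ( [b]_q!·([a]_q!)^b/(b!·(a!)^b) − [a]_q!·([b]_q!)^a/(a!·(b!)^a) ) equals (ab)!·(a−1)·(b−1)·(b−a)/4. -/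
open Filter

/-- The `q`-factorial `[n]_q! = ∏_{k=1}^{n} (1 + q + ⋯ + q^{k-1})`, as a real function of `q`. -/
noncomputable def qFactR (n : ℕ) (q : ℝ) : ℝ :=
  ∏ k ∈ Finset.range n, ∑ i ∈ Finset.range (k + 1), q ^ i

lemma qFactR_one (n : ℕ) : qFactR n 1 = n.factorial := by
  have h : ∀ k : ℕ, (∑ i ∈ Finset.range (k + 1), (1 : ℝ) ^ i) = ((k + 1 : ℕ) : ℝ) := by
    intro k; simp
  rw [qFactR]
  simp only [h]
  rw [← Nat.cast_prod, Finset.prod_range_add_one_eq_factorial]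

lemma sum_range_cast (n : ℕ) :
    (∑ i ∈ Finset.range n, (i : ℝ)) = (n : ℝ) * ((n : ℝ) - 1) / 2 := by
  induction n with
  | zero => simp
  | succ n ih =>
    rw [Finset.sum_range_succ, ih]
    push_cast
    ring

lemma geomSum_hasDerivAt (k : ℕ) :
    HasDerivAt (fun q : ℝ => ∑ i ∈ Finset.range (k + 1), q ^ i)
      (((k : ℝ) + 1) * (k : ℝ) / 2) 1 := by
  have h : HasDerivAt (fun q : ℝ => ∑ i ∈ Finset.range (k + 1), q ^ i)
      (∑ i ∈ Finset.range (k + 1), (i : ℝ) * (1 : ℝ) ^ (i - 1)) 1 :=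
    HasDerivAt.fun_sum fun i _ => hasDerivAt_pow i 1
  have he : (∑ i ∈ Finset.range (k + 1), (i : ℝ) * (1 : ℝ) ^ (i - 1))
      = ((k : ℝ) + 1) * (k : ℝ) / 2 := by
    simp only [one_pow, mul_one]
    rw [sum_range_cast]
    push_cast
    ring
  rwa [he] at h

lemma qFactR_hasDerivAt (n : ℕ) :
    HasDerivAt (qFactR n) ((n.factorial : ℝ) * n * ((n : ℝ) - 1) / 4) 1 := by
  induction n with
  | zero =>
    have : HasDerivAt (qFactR 0) 0 1 := by
      have : qFactR 0 = fun _ : ℝ => 1 := by funext q; simp [qFactR]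
      rw [this]; exact hasDerivAt_const 1 1
    simpa using this
  | succ n ih =>
    have heq : qFactR (n + 1) = fun q : ℝ =>
        qFactR n q * ∑ i ∈ Finset.range (n + 1), q ^ i := by
      funext q; rw [qFactR, Finset.prod_range_succ]; rfl
    have h := ih.mul (geomSum_hasDerivAt n)
    rw [heq]
    convert h using 1
    case e'_4 => rfl
    case e'_5 => rfl
    case e'_8 => rfl
    rw [qFactR_one]
    have h1 : (∑ i ∈ Finset.range (n + 1), (1 : ℝ) ^ i) = ((n : ℝ) + 1) := by simp
    rw [h1, Nat.factorial_succ]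
    push_cast
    ring

/-- For `0 < a ≤ b`, the limit as `q → 1` of
`(ab)!/(1−q) · ( [b]_q!·([a]_q!)^b/(b!·(a!)^b) − [a]_q!·([b]_q!)^a/(a!·(b!)^a) )`
equals `(ab)!·(a−1)·(b−1)·(b−a)/4`. -/
theorem qdim_limit_at_one (a b : ℕ) (ha : 0 < a) (hab : a ≤ b) :
    Tendsto
      (fun q : ℝ =>
        ((a * b).factorial : ℝ) / (1 - q) *
          (qFactR b q * (qFactR a q) ^ b / ((b.factorial : ℝ) * (a.factorial : ℝ) ^ b) -
            qFactR a q * (qFactR b q) ^ a / ((a.factorial : ℝ) * (b.factorial : ℝ) ^ a)))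
      (nhdsWithin 1 {(1 : ℝ)}ᶜ)
      (nhds (((a * b).factorial : ℝ) * ((a : ℝ) - 1) * ((b : ℝ) - 1) * ((b : ℝ) - (a : ℝ)) / 4)) := by
  set f : ℝ → ℝ := fun q =>
      qFactR b q * (qFactR a q) ^ b / ((b.factorial : ℝ) * (a.factorial : ℝ) ^ b) -
        qFactR a q * (qFactR b q) ^ a / ((a.factorial : ℝ) * (b.factorial : ℝ) ^ a) with hfdef
  have hb : 0 < b := lt_of_lt_of_le ha hab
  have hxa : ((a.factorial : ℝ)) ≠ 0 := Nat.cast_ne_zero.2 a.factorial_ne_zero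
  have hxb : ((b.factorial : ℝ)) ≠ 0 := Nat.cast_ne_zero.2 b.factorial_ne_zero
  have hpowab : (a.factorial : ℝ) ^ b = (a.factorial : ℝ) ^ (b - 1) * (a.factorial : ℝ) := by
    rw [← pow_succ, Nat.sub_add_cancel hb]
  have hpowba : (b.factorial : ℝ) ^ a = (b.factorial : ℝ) ^ (a - 1) * (b.factorial : ℝ) := by
    rw [← pow_succ, Nat.sub_add_cancel ha]
  have hf1 : f 1 = 0 := by
    simp only [hfdef, qFactR_one]
    rw [div_self (by positivity), div_self (by positivity)]
    ring
  have hDa := qFactR_hasDerivAt a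
  have hDb := qFactR_hasDerivAt b
  have hf : HasDerivAt f
      (-(((a : ℝ) - 1) * ((b : ℝ) - 1) * ((b : ℝ) - (a : ℝ)) / 4)) 1 := by
    have h := ((hDb.mul (hDa.pow b)).div_const ((b.factorial : ℝ) * (a.factorial : ℝ) ^ b)).sub
      ((hDa.mul (hDb.pow a)).div_const ((a.factorial : ℝ) * (b.factorial : ℝ) ^ a))
    convert h using 1
    case e'_4 => rfl
    case e'_5 => rfl
    case e'_8 => rfl
    simp only [Pi.pow_apply]
    rw [qFactR_one, qFactR_one, hpowab, hpowba]
    have hXa : (a.factorial : ℝ) ^ (b - 1) ≠ 0 := pow_ne_zero _ hxa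
    have hXb : (b.factorial : ℝ) ^ (a - 1) ≠ 0 := pow_ne_zero _ hxb
    field_simp
    ring
  have hslope := hasDerivAt_iff_tendsto_slope.mp hf
  have h2 := hslope.const_mul (-((a * b).factorial : ℝ))
  have hfun : (fun q : ℝ =>
      ((a * b).factorial : ℝ) / (1 - q) * f q)
      = fun q : ℝ => -((a * b).factorial : ℝ) * slope f 1 q := by
    funext q
    rw [slope_def_field, hf1, sub_zero, show (1 : ℝ) - q = -(q - 1) by ring, div_neg]
    ring
  have h3 : (-((a * b).factorial : ℝ)) *
      (-(((a : ℝ) - 1) * ((b : ℝ) - 1) * ((b : ℝ) - (a : ℝ)) / 4))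
      = ((a * b).factorial : ℝ) * ((a : ℝ) - 1) * ((b : ℝ) - 1) * ((b : ℝ) - (a : ℝ)) / 4 := by
    ring
  rw [show (fun q : ℝ =>
        ((a * b).factorial : ℝ) / (1 - q) *
          (qFactR b q * (qFactR a q) ^ b / ((b.factorial : ℝ) * (a.factorial : ℝ) ^ b) -
            qFactR a q * (qFactR b q) ^ a / ((a.factorial : ℝ) * (b.factorial : ℝ) ^ a)))
      = fun q : ℝ => ((a * b).factorial : ℝ) / (1 - q) * f q from rfl, hfun, ← h3]
  exact h2
end
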